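/- Let A and B be measurable spaces, let μ be a probability measure on A × B with marginals μ₁ on A and μ₂ on B, and let T : A × B → ℝ be measurable such that (a,b) ↦ sp(−T(a,b)) is μ-integrable and (a,b) ↦ sp(T(a,b)) is (μ₁ ⊗ μ₂)-integrable, where sp(z) = log(1 + exp z). Then ∫ (− sp(−T)) dμ − ∫ sp(T) d(μ₁ ⊗ μ₂) ≤ 2·JS(μ, μ₁ ⊗ μ₂) − log 4, where JS(P, Q) = (1/2)·KL(P ‖ (1/2)(P+Q)) + (1/2)·KL(Q ‖ (1/2)(P+Q)). -/

import Mathlib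

/-!
With `M = ½(P + Q)` and the densities `p = dP/dM`, `q = dQ/dM` (so `p + q = 2` a.e.), the
left-hand side is `∫ (p log σ(T) + q log(1 - σ(T))) dM` for the sigmoid `σ`, since
`-sp(-t) = log σ(t)` and `-sp(t) = log(1 - σ(t))`. Pointwise, Gibbs' inequality for the
two-point distributions `(p/2, q/2)` and `(s, 1 - s)` gives
`p log s + q log(1 - s) ≤ p log p + q log q - log 4`, and integrating the right-hand side
yields `KL(P ‖ M) + KL(Q ‖ M) - log 4 = 2·JS(P, Q) - log 4`. The densities are bounded by `2`,
so both Kullback–Leibler divergences are finite.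
-/

open MeasureTheory
open scoped ENNReal Classical

/-- The softplus function `sp(z) = log(1 + exp z)`. -/
noncomputable def softplus (z : ℝ) : ℝ := Real.log (1 + Real.exp z)

/-- Kullback–Leibler divergence between measures: `∫ log(dP/dQ) dP` when `P ≪ Q` and the
log-likelihood ratio is `P`-integrable, and `∞` otherwise. -/
noncomputable def klDivM {Ω : Type*} [MeasurableSpace Ω] (P Q : Measure Ω) : ℝ≥0∞ :=
  if P ≪ Q ∧ Integrable (llr P Q) P then ENNReal.ofReal (∫ ω, llr P Q ω ∂P) else ⊤

/-- Jensen–Shannon divergence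
`JS(P, Q) = (1/2)·KL(P ‖ (1/2)(P+Q)) + (1/2)·KL(Q ‖ (1/2)(P+Q))`. -/
noncomputable def jsDiv {Ω : Type*} [MeasurableSpace Ω] (P Q : Measure Ω) : ℝ≥0∞ :=
  2⁻¹ * klDivM P ((2 : ℝ≥0∞)⁻¹ • (P + Q)) + 2⁻¹ * klDivM Q ((2 : ℝ≥0∞)⁻¹ • (P + Q))

open Real

lemma log_sigmoid (t : ℝ) : log (sigmoid t) = -softplus (-t) := by
  rw [sigmoid_def, log_inv, softplus]

lemma mul_log_le_mul_log_add_sub {p s : ℝ} (hp : 0 ≤ p) (hs : 0 < s) :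
    p * log s ≤ p * log p + s - p := by
  rcases hp.eq_or_lt with rfl | hp
  · simpa using hs.le
  have h := mul_le_mul_of_nonneg_left (log_le_sub_one_of_pos (div_pos hs hp)) hp.le
  rw [log_div hs.ne' hp.ne', mul_sub_one, mul_div_cancel₀ _ hp.ne'] at h
  linarith

lemma mul_log_add_mul_log_one_sub_le {p q s : ℝ} (hp : 0 ≤ p) (hq : 0 ≤ q) (hpq : p + q = 2)
    (hs₀ : 0 < s) (hs₁ : s < 1) :
    p * log s + q * log (1 - s) ≤ p * log p + q * log q - log 4 := by
  have hP := mul_log_le_mul_log_add_sub hp (by positivity : 0 < 2 * s)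
  have hQ := mul_log_le_mul_log_add_sub hq (by linarith : 0 < 2 * (1 - s))
  rw [log_mul two_ne_zero hs₀.ne'] at hP
  rw [log_mul two_ne_zero (by linarith)] at hQ
  have h4 : log 4 = (p + q) * log 2 := by
    rw [hpq, show (4 : ℝ) = 2 ^ 2 by norm_num, log_pow]; push_cast; ring
  linarith

lemma mul_neg_softplus_neg_add_mul_neg_softplus_le {p q : ℝ} (hp : 0 ≤ p) (hq : 0 ≤ q)
    (hpq : p + q = 2) (t : ℝ) :
    p * -softplus (-t) + q * -softplus t ≤ p * log p + q * log q - log 4 := by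
  have h := mul_log_add_mul_log_one_sub_le hp hq hpq (sigmoid_pos t) (sigmoid_lt_one t)
  rwa [← sigmoid_neg, log_sigmoid, log_sigmoid, neg_neg] at h

lemma abs_mul_log_le_one_add_sq {x : ℝ} (hx : 0 ≤ x) : |x * log x| ≤ 1 + x ^ 2 := by
  rcases hx.eq_or_lt with rfl | hx
  · simp
  rcases le_or_gt x 1 with hx₁ | hx₁
  · rw [mul_comm]
    linarith [abs_log_mul_self_lt x hx hx₁, sq_nonneg x]
  · have h₀ : 0 ≤ log x := log_nonneg hx₁.le
    have h₁ : log x ≤ x - 1 := log_le_sub_one_of_pos hx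
    rw [abs_of_nonneg (by positivity)]
    nlinarith

section

variable {Ω : Type*} [MeasurableSpace Ω]

lemma integrable_llr_of_ae_toReal_rnDeriv_le {P M : Measure Ω} [SigmaFinite P]
    [IsFiniteMeasure M] (hPM : P ≪ M) {c : ℝ} (hc : ∀ᵐ x ∂M, (P.rnDeriv M x).toReal ≤ c) :
    Integrable (llr P M) P := by
  rw [← integrable_rnDeriv_smul_iff hPM]
  have hmeas := (Measure.measurable_rnDeriv P M).ennreal_toReal.smul (measurable_llr P M)
  refine (integrable_const (1 + c ^ 2)).mono' hmeas.aestronglyMeasurable ?_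
  filter_upwards [hc] with x hx
  have h₀ : 0 ≤ (P.rnDeriv M x).toReal := ENNReal.toReal_nonneg
  calc |(P.rnDeriv M x).toReal * log (P.rnDeriv M x).toReal|
      ≤ 1 + (P.rnDeriv M x).toReal ^ 2 := abs_mul_log_le_one_add_sq h₀
    _ ≤ 1 + c ^ 2 := by gcongr

section

variable {P Q M : Measure Ω} [SigmaFinite P] [SigmaFinite Q] [SigmaFinite M] {f g : Ω → ℝ}

lemma integrable_rnDeriv_smul_add_rnDeriv_smul (hPM : P ≪ M) (hQM : Q ≪ M)
    (hf : Integrable f P) (hg : Integrable g Q) :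
    Integrable (fun x => (P.rnDeriv M x).toReal • f x + (Q.rnDeriv M x).toReal • g x) M :=
  ((integrable_rnDeriv_smul_iff hPM).2 hf).add ((integrable_rnDeriv_smul_iff hQM).2 hg)

lemma integral_rnDeriv_smul_add_rnDeriv_smul (hPM : P ≪ M) (hQM : Q ≪ M)
    (hf : Integrable f P) (hg : Integrable g Q) :
    ∫ x, (P.rnDeriv M x).toReal • f x + (Q.rnDeriv M x).toReal • g x ∂M =
      ∫ x, f x ∂P + ∫ x, g x ∂Q := by
  rw [integral_add ((integrable_rnDeriv_smul_iff hPM).2 hf)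
    ((integrable_rnDeriv_smul_iff hQM).2 hg), integral_rnDeriv_smul hPM,
    integral_rnDeriv_smul hQM]

end

variable (P Q : Measure Ω)

lemma absolutelyContinuous_half_add_left : P ≪ (2⁻¹ : ℝ≥0∞) • (P + Q) :=
  (Measure.AbsolutelyContinuous.rfl.add_right Q).smul_right (by simp)

lemma absolutelyContinuous_half_add_right : Q ≪ (2⁻¹ : ℝ≥0∞) • (P + Q) :=
  (Measure.AbsolutelyContinuous.rfl.add_right' P).smul_right (by simp)

lemma isFiniteMeasure_half_add [IsFiniteMeasure P] [IsFiniteMeasure Q] :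
    IsFiniteMeasure ((2⁻¹ : ℝ≥0∞) • (P + Q)) :=
  ⟨ENNReal.mul_lt_top (by simp) (measure_lt_top _ _)⟩

lemma isProbabilityMeasure_half_add [IsProbabilityMeasure P] [IsProbabilityMeasure Q] :
    IsProbabilityMeasure ((2⁻¹ : ℝ≥0∞) • (P + Q)) :=
  ⟨by simp [ENNReal.inv_two_add_inv_two]⟩

lemma toReal_rnDeriv_add_toReal_rnDeriv_half_add [IsFiniteMeasure P] [IsFiniteMeasure Q] :
    ∀ᵐ x ∂(2⁻¹ : ℝ≥0∞) • (P + Q), (P.rnDeriv ((2⁻¹ : ℝ≥0∞) • (P + Q)) x).toReal +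
      (Q.rnDeriv ((2⁻¹ : ℝ≥0∞) • (P + Q)) x).toReal = 2 := by
  set M := (2⁻¹ : ℝ≥0∞) • (P + Q)
  have := isFiniteMeasure_half_add P Q
  have hM : P + Q = (2 : ℝ≥0∞) • M := by
    rw [smul_smul, ENNReal.mul_inv_cancel two_ne_zero ENNReal.ofNat_ne_top, one_smul]
  have hsum := Measure.rnDeriv_add P Q M
  rw [hM] at hsum
  filter_upwards [hsum,
    Measure.rnDeriv_smul_left_of_ne_top M M (ENNReal.ofNat_ne_top (n := 2)), Measure.rnDeriv_self M,
    Measure.rnDeriv_lt_top P M, Measure.rnDeriv_lt_top Q M]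
    with x hsum hsmul hself hP hQ
  rw [← ENNReal.toReal_add hP.ne hQ.ne, ← Pi.add_apply, ← hsum, hsmul]
  simp [hself]

lemma integral_llr_add_integral_llr_half_add_le_two_mul_toReal_jsDiv
    (hP : Integrable (llr P ((2⁻¹ : ℝ≥0∞) • (P + Q))) P)
    (hQ : Integrable (llr Q ((2⁻¹ : ℝ≥0∞) • (P + Q))) Q) :
    ∫ x, llr P ((2⁻¹ : ℝ≥0∞) • (P + Q)) x ∂P + ∫ x, llr Q ((2⁻¹ : ℝ≥0∞) • (P + Q)) x ∂Q ≤
      2 * (jsDiv P Q).toReal := by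
  set M := (2⁻¹ : ℝ≥0∞) • (P + Q)
  have hKP : klDivM P M = ENNReal.ofReal _ :=
    if_pos ⟨absolutelyContinuous_half_add_left P Q, hP⟩
  have hKQ : klDivM Q M = ENNReal.ofReal _ :=
    if_pos ⟨absolutelyContinuous_half_add_right P Q, hQ⟩
  rw [jsDiv, hKP, hKQ, ENNReal.toReal_add (by finiteness) (by finiteness), ENNReal.toReal_mul,
    ENNReal.toReal_mul, ENNReal.toReal_ofReal', ENNReal.toReal_ofReal', ENNReal.toReal_inv,
    ENNReal.toReal_ofNat]
  linarith [le_max_left (∫ x, llr P M x ∂P) 0, le_max_left (∫ x, llr Q M x ∂Q) 0]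

end

theorem integral_neg_softplus_neg_sub_integral_softplus_le {Ω : Type*} [MeasurableSpace Ω]
    {P Q : Measure Ω} [IsProbabilityMeasure P] [IsProbabilityMeasure Q] {t : Ω → ℝ}
    (hP : Integrable (fun x => softplus (-t x)) P)
    (hQ : Integrable (fun x => softplus (t x)) Q) :
    (∫ x, -softplus (-t x) ∂P) - ∫ x, softplus (t x) ∂Q ≤ 2 * (jsDiv P Q).toReal - log 4 := by
  set M := (2⁻¹ : ℝ≥0∞) • (P + Q)
  have := isProbabilityMeasure_half_add P Q
  have hPM : P ≪ M := absolutelyContinuous_half_add_left P Q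
  have hQM : Q ≪ M := absolutelyContinuous_half_add_right P Q
  set p := fun x => (P.rnDeriv M x).toReal
  set q := fun x => (Q.rnDeriv M x).toReal
  have hpq : ∀ᵐ x ∂M, p x + q x = 2 := toReal_rnDeriv_add_toReal_rnDeriv_half_add P Q
  have hlP : Integrable (llr P M) P := integrable_llr_of_ae_toReal_rnDeriv_le hPM (c := 2)
    (hpq.mono fun x hx => by linarith [ENNReal.toReal_nonneg (a := Q.rnDeriv M x)])
  have hlQ : Integrable (llr Q M) Q := integrable_llr_of_ae_toReal_rnDeriv_le hQM (c := 2)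
    (hpq.mono fun x hx => by linarith [ENNReal.toReal_nonneg (a := P.rnDeriv M x)])
  have hpt : ∀ᵐ x ∂M, p x • -softplus (-t x) + q x • -softplus (t x) ≤
      p x • llr P M x + q x • llr Q M x - log 4 := hpq.mono fun x hx =>
    mul_neg_softplus_neg_add_mul_neg_softplus_le ENNReal.toReal_nonneg ENNReal.toReal_nonneg hx
      (t x)
  calc (∫ x, -softplus (-t x) ∂P) - ∫ x, softplus (t x) ∂Q
      = ∫ x, p x • -softplus (-t x) + q x • -softplus (t x) ∂M := by
        rw [integral_rnDeriv_smul_add_rnDeriv_smul (f := fun x => -softplus (-t x))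
          (g := fun x => -softplus (t x)) hPM hQM hP.neg hQ.neg,
          integral_neg fun x => softplus (t x), sub_eq_add_neg]
    _ ≤ ∫ x, p x • llr P M x + q x • llr Q M x - log 4 ∂M :=
        integral_mono_ae (integrable_rnDeriv_smul_add_rnDeriv_smul hPM hQM hP.neg hQ.neg)
          ((integrable_rnDeriv_smul_add_rnDeriv_smul hPM hQM hlP hlQ).sub (integrable_const _))
          hpt
    _ = ∫ x, llr P M x ∂P + ∫ x, llr Q M x ∂Q - log 4 := by
        rw [integral_sub (integrable_rnDeriv_smul_add_rnDeriv_smul hPM hQM hlP hlQ)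
          (integrable_const _), integral_rnDeriv_smul_add_rnDeriv_smul hPM hQM hlP hlQ,
          integral_const]
        simp
    _ ≤ 2 * (jsDiv P Q).toReal - log 4 := by
        linarith [integral_llr_add_integral_llr_half_add_le_two_mul_toReal_jsDiv P Q hlP hlQ]

theorem js_mutual_information_bound_general {A B : Type*} [MeasurableSpace A] [MeasurableSpace B]
    (μ : Measure (A × B)) [IsProbabilityMeasure μ]
    (μ₁ : Measure A) (μ₂ : Measure B)
    (hμ₁ : μ₁ = μ.map Prod.fst) (hμ₂ : μ₂ = μ.map Prod.snd)
    (T : A × B → ℝ)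
    (hμint : Integrable (fun p => softplus (-T p)) μ)
    (hprodint : Integrable (fun p => softplus (T p)) (μ₁.prod μ₂)) :
    (∫ p, -softplus (-T p) ∂μ) - (∫ p, softplus (T p) ∂(μ₁.prod μ₂)) ≤
      2 * (jsDiv μ (μ₁.prod μ₂)).toReal - Real.log 4 := by
  have : IsProbabilityMeasure μ₁ :=
    hμ₁ ▸ Measure.isProbabilityMeasure_map measurable_fst.aemeasurable
  have : IsProbabilityMeasure μ₂ :=
    hμ₂ ▸ Measure.isProbabilityMeasure_map measurable_snd.aemeasurable
  exact integral_neg_softplus_neg_sub_integral_softplus_le hμint hprodint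

/-- Jensen–Shannon mutual information lower bound (Equation (7)): for a joint probability
measure `μ` on `A × B` with marginals `μ₁`, `μ₂`,
`∫ (−sp(−T)) dμ − ∫ sp(T) d(μ₁ ⊗ μ₂) ≤ 2·JS(μ, μ₁ ⊗ μ₂) − log 4`. -/
theorem js_mutual_information_bound {A B : Type*} [MeasurableSpace A] [MeasurableSpace B]
    (μ : Measure (A × B)) [IsProbabilityMeasure μ]
    (μ₁ : Measure A) (μ₂ : Measure B)
    (hμ₁ : μ₁ = μ.map Prod.fst) (hμ₂ : μ₂ = μ.map Prod.snd)
    (T : A × B → ℝ) (hT : Measurable T)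
    (hμint : Integrable (fun p => softplus (-T p)) μ)
    (hprodint : Integrable (fun p => softplus (T p)) (μ₁.prod μ₂)) :
    (∫ p, -softplus (-T p) ∂μ) - (∫ p, softplus (T p) ∂(μ₁.prod μ₂)) ≤
      2 * (jsDiv μ (μ₁.prod μ₂)).toReal - Real.log 4 :=
  js_mutual_information_bound_general μ μ₁ μ₂ hμ₁ hμ₂ T hμint hprodint
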